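/- arXiv:1702.01180 — 3 statements merged into one kernel-verified Lean document; each statement's English description precedes it below -/
import Mathlib

section
/- Let K be the reference tetrahedron in ℝ³ and let p ≥ 1 be an integer. For every vector polynomial B ∈ (P_p)³ there exists a vector polynomial Φ ∈ (P_p)³ whose normal component vanishes on each face of K such that div(B + Φ) is constant on K, equal to (1/|K|) ∫_K div B dx, where |K| = 1/6 is the volume of K. -/
open MeasureTheory MvPolynomial Real

noncomputable section

/-- Vertices of the reference tetrahedron: v0=(0,0,0), v1=(1,0,0), v2=(0,1,0), v3=(0,0,1). -/
def vtx : Fin 4 → Fin 3 → ℝ :=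
  ![![0,0,0], ![1,0,0], ![0,1,0], ![0,0,1]]

/-- Barycentric coordinates λ₀ = 1-x-y-z, λ₁ = x, λ₂ = y, λ₃ = z. -/
def lam : Fin 4 → (Fin 3 → ℝ) → ℝ :=
  ![fun x => 1 - x 0 - x 1 - x 2, fun x => x 0, fun x => x 1, fun x => x 2]

/-- The reference tetrahedron K = {x : λ_j(x) ≥ 0 for all j}. -/
def Ktet : Set (Fin 3 → ℝ) := {x | ∀ j : Fin 4, 0 ≤ lam j x}

/-- Face F_j = {x ∈ K : λ_j(x) = 0}. -/
def faceK (j : Fin 4) : Set (Fin 3 → ℝ) := {x ∈ Ktet | lam j x = 0}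

/-- Outward unit normals of the four faces of K. -/
def normalK : Fin 4 → Fin 3 → ℝ :=
  ![fun _ => 1 / Real.sqrt 3, ![-1,0,0], ![0,-1,0], ![0,0,-1]]

/-- (Constant) gradients of the barycentric coordinates. -/
def gradLam : Fin 4 → Fin 3 → ℝ :=
  ![![-1,-1,-1], ![1,0,0], ![0,1,0], ![0,0,1]]

/-- Divergence of a vector polynomial. -/
def divP (Φ : Fin 3 → MvPolynomial (Fin 3) ℝ) : MvPolynomial (Fin 3) ℝ :=
  ∑ i, MvPolynomial.pderiv i (Φ i)

/-- The normal component of the vector polynomial Φ vanishes on every face of K. -/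
def normalVanish (Φ : Fin 3 → MvPolynomial (Fin 3) ℝ) : Prop :=
  ∀ j : Fin 4, ∀ q ∈ faceK j, ∑ i, MvPolynomial.eval q (Φ i) * normalK j i = 0

/-- Divergence of a vector field (as a function). -/
def divF (Φ : (Fin 3 → ℝ) → (Fin 3 → ℝ)) (x : Fin 3 → ℝ) : ℝ :=
  ∑ i, fderiv ℝ Φ x (Pi.single i 1) i

/-- The normal component of the vector field Φ vanishes on every face of K. -/
def normalVanishF (Φ : (Fin 3 → ℝ) → (Fin 3 → ℝ)) : Prop :=
  ∀ j : Fin 4, ∀ q ∈ faceK j, ∑ i, Φ q i * normalK j i = 0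

/-!
Look for the correction as a bubble field `Φᵢ = λ₀ xᵢ Fᵢ`. Its normal component vanishes on every
face, since `λ₀ = 0` on `F₀` and `xᵢ = 0` on `Fᵢ`, and each `λ₀ xᵢ Fᵢ` vanishes on both ends of
every line parallel to the `xᵢ`-axis through `K`, so `∫_K div Φ = 0`. It therefore suffices to
write `div B = div (λ₀ x F) + c` with `deg (λ₀ xᵢ Fᵢ) ≤ p`; the constant is then the mean of
`div B`. For a monomial `x^μ` of degree `d` in `n` variables,
`div (λ₀ x x^μ) = (d + n + 1) λ₀ x^μ - x^μ` and `∂ᵢ (λ₀ xᵢ x^μ) = (μᵢ + 1) λ₀ x^μ - xᵢ x^μ`,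
so `xᵢ x^μ` is a multiple of `x^μ` modulo bubble divergences, and induction on the degree
handles every polynomial. Finally `|K| = 1/3!` by slicing, from
`∫_{Σx ≤ 1, x ≥ 0} (1 - Σx)^k = k! / (n + k)!`.
-/

namespace MvPolynomial

lemma totalDegree_pderiv_le {σ R : Type*} [CommSemiring R] (i : σ) (f : MvPolynomial σ R) :
    (pderiv i f).totalDegree ≤ f.totalDegree - 1 := by
  refine Finset.sup_le fun m hm => ?_
  rw [mem_support_iff, coeff_pderiv] at hm
  have hle := le_totalDegree (mem_support_iff.mpr (left_ne_zero_of_mul hm))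
  change (m + Finsupp.single i 1).degree ≤ _ at hle
  change m.degree ≤ _
  rw [map_add, Finsupp.degree_single] at hle
  omega

variable {σ R : Type*} [Fintype σ]

section CommRing

variable [CommRing R]

def lamZero : MvPolynomial σ R := 1 - ∑ i, X i

def bubble : (σ → MvPolynomial σ R) →ₗ[R] σ → MvPolynomial σ R where
  toFun F i := lamZero * X i * F i
  map_add' F G := by ext1 i; simp [mul_add]
  map_smul' r F := by ext1 i; simp

def divergence : (σ → MvPolynomial σ R) →ₗ[R] MvPolynomial σ R where
  toFun Φ := ∑ i, pderiv i (Φ i)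
  map_add' Φ Ψ := by simp [Finset.sum_add_distrib]
  map_smul' r Φ := by simp [Finset.smul_sum]

lemma bubble_apply (F : σ → MvPolynomial σ R) (i : σ) : bubble F i = lamZero * X i * F i := rfl

lemma divergence_apply (Φ : σ → MvPolynomial σ R) : divergence Φ = ∑ i, pderiv i (Φ i) := rfl

lemma totalDegree_lamZero_le [Nontrivial R] : (lamZero : MvPolynomial σ R).totalDegree ≤ 1 := by
  refine (totalDegree_sub _ _).trans (max_le (by simp) ?_)
  exact (totalDegree_finsetSum _ _).trans (Finset.sup_le fun i _ => (totalDegree_X i).le)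

lemma totalDegree_bubble_le [Nontrivial R] {F : σ → MvPolynomial σ R} {d : ℕ}
    (hF : ∀ i, (F i).totalDegree ≤ d) (i : σ) : (bubble F i).totalDegree ≤ d + 2 := by
  grw [bubble_apply, totalDegree_mul, totalDegree_mul, totalDegree_lamZero_le, totalDegree_X,
    hF i]
  omega

lemma pderiv_lamZero (j : σ) : pderiv j (lamZero : MvPolynomial σ R) = -1 := by
  classical
  simp [lamZero, pderiv_X, Finset.sum_pi_single']

lemma pderiv_bubble_monomial (j : σ) (μ : σ →₀ ℕ) :
    pderiv j (lamZero * X j * monomial μ (1 : R))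
      = ((μ j : R) + 1) • (lamZero * monomial μ 1) - X j * monomial μ 1 := by
  have hX : X j * monomial μ (1 : R) = monomial (μ + Finsupp.single j 1) 1 := by
    rw [monomial_add_single, pow_one, mul_comm]
  rw [mul_assoc, pderiv_mul, pderiv_lamZero, hX, pderiv_monomial, ← hX, add_tsub_cancel_right,
    Finsupp.add_apply, Finsupp.single_eq_same, one_mul, Nat.cast_add_one,
    show monomial μ ((μ j : R) + 1) = C ((μ j : R) + 1) * monomial μ 1 by
      rw [C_mul_monomial, mul_one], smul_eq_C_mul]
  ring

lemma divergence_bubble_const_monomial (μ : σ →₀ ℕ) :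
    divergence (bubble fun _ => monomial μ (1 : R))
      = ((μ.degree + Fintype.card σ + 1 : ℕ) : R) • (lamZero * monomial μ 1) - monomial μ 1 := by
  simp only [divergence_apply, bubble_apply, pderiv_bubble_monomial, Finset.sum_sub_distrib,
    ← Finset.sum_smul, ← Finset.sum_mul]
  have hX : ∑ i, X i = (1 - lamZero : MvPolynomial σ R) := by simp [lamZero]
  rw [hX, Finsupp.degree_eq_sum]
  push_cast
  rw [Finset.sum_add_distrib, Finset.sum_const, Finset.card_univ, nsmul_one]
  simp only [add_smul, one_smul]
  ring

lemma divergence_bubble_single_monomial [DecidableEq σ] (i : σ) (μ : σ →₀ ℕ) :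
    divergence (bubble (Pi.single i (monomial μ (1 : R))))
      = ((μ i : R) + 1) • (lamZero * monomial μ 1) - monomial (μ + Finsupp.single i 1) 1 := by
  rw [divergence_apply, Finset.sum_eq_single i]
  · rw [bubble_apply, Pi.single_eq_same, pderiv_bubble_monomial, monomial_add_single, pow_one,
      mul_comm (monomial μ (1 : R))]
  · intro j _ hj
    simp [bubble_apply, Pi.single_eq_of_ne hj]
  · simp

end CommRing

section Field

variable {K : Type*} [Field K]

def correctable (d : ℕ) : Submodule K (MvPolynomial σ K) where
  carrier := {q | ∃ F c, (∀ i, (bubble F i).totalDegree ≤ d + 1) ∧ q = divergence (bubble F) + C c}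
  zero_mem' := ⟨0, 0, by simp, by simp⟩
  add_mem' := by
    rintro _ _ ⟨F, c, hF, rfl⟩ ⟨G, e, hG, rfl⟩
    refine ⟨F + G, c + e, fun i => ?_, by simp only [map_add]; ring⟩
    rw [map_add, Pi.add_apply]
    exact (totalDegree_add _ _).trans (max_le (hF i) (hG i))
  smul_mem' := by
    rintro r _ ⟨F, c, hF, rfl⟩
    refine ⟨r • F, r * c, fun i => ?_, by simp only [map_smul, smul_add, smul_eq_C_mul, map_mul]⟩
    rw [map_smul, Pi.smul_apply]
    exact (totalDegree_smul_le _ _).trans (hF i)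

lemma correctable_mono {d e : ℕ} (h : d ≤ e) : correctable (σ := σ) (K := K) d ≤ correctable e := by
  rintro _ ⟨F, c, hF, rfl⟩
  exact ⟨F, c, fun i => (hF i).trans (by omega), rfl⟩

variable [CharZero K]

lemma monomial_add_single_eq_smul_add_divergence [DecidableEq σ] (i : σ) (μ : σ →₀ ℕ) :
    let a : K := ((μ i : K) + 1) / (μ.degree + Fintype.card σ + 1 : ℕ)
    monomial (μ + Finsupp.single i 1) 1 = a • monomial μ 1
      + divergence (bubble (a • (fun _ => monomial μ 1) - Pi.single i (monomial μ 1))) := by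
  intro a
  have hne : ((μ.degree + Fintype.card σ + 1 : ℕ) : K) ≠ 0 :=
    Nat.cast_ne_zero.mpr (Nat.succ_ne_zero _)
  rw [map_sub, map_smul, map_sub, map_smul, divergence_bubble_const_monomial,
    divergence_bubble_single_monomial, smul_sub, smul_smul, div_mul_cancel₀ _ hne]
  abel

lemma monomial_mem_correctable (d : ℕ) (m : σ →₀ ℕ) (hm : m.degree ≤ d) :
    monomial m (1 : K) ∈ correctable d := by
  classical
  induction d generalizing m with
  | zero =>
    rw [Nat.le_zero, Finsupp.degree_eq_zero_iff] at hm
    exact ⟨0, 1, by simp, by simp [hm]⟩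
  | succ d ih =>
    rcases hm.lt_or_eq with hlt | hdeg
    · exact correctable_mono d.le_succ (ih m (by omega))
    obtain ⟨i, hi⟩ : ∃ i, m i ≠ 0 := by
      by_contra! h
      simp [show m = 0 from Finsupp.ext h] at hdeg
    set μ := m - Finsupp.single i 1
    have hm : μ + Finsupp.single i 1 = m :=
      tsub_add_cancel_of_le (Finsupp.single_le_iff.mpr (Nat.one_le_iff_ne_zero.mpr hi))
    have hμ : μ.degree = d := by
      have := congrArg Finsupp.degree hm
      rw [map_add, Finsupp.degree_single, hdeg] at this
      omega
    rw [← hm, monomial_add_single_eq_smul_add_divergence]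
    refine add_mem (Submodule.smul_mem _ _ (correctable_mono d.le_succ (ih μ hμ.le)))
      ⟨_, 0, fun j => (totalDegree_bubble_le (d := d) (fun k => ?_) j).trans (by omega),
        by rw [C_0, add_zero]⟩
    have hμdeg : (monomial μ (1 : K)).totalDegree ≤ d := (totalDegree_monomial_le _ _).trans hμ.le
    refine (totalDegree_sub _ _).trans (max_le ((totalDegree_smul_le _ _).trans hμdeg) ?_)
    rcases eq_or_ne k i with rfl | hki
    · simpa using hμdeg
    · simp [Pi.single_eq_of_ne hki]

lemma restrictTotalDegree_le_correctable (d : ℕ) :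
    restrictTotalDegree σ K d ≤ correctable d := by
  rw [restrictTotalDegree, restrictSupport_eq_span, Submodule.span_le]
  rintro _ ⟨m, hm, rfl⟩
  exact monomial_mem_correctable d m hm

end Field

end MvPolynomial

def cornerSimplex (n : ℕ) : Set (Fin n → ℝ) := {x | (∀ i, 0 ≤ x i) ∧ ∑ i, x i ≤ 1}

lemma isCompact_cornerSimplex (n : ℕ) : IsCompact (cornerSimplex n) := by
  have hclosed : IsClosed (cornerSimplex n) :=
    (isClosed_Ici (a := 0)).inter
      (isClosed_le (continuous_finsetSum _ fun i _ => continuous_apply i) continuous_const)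
  refine (isCompact_Icc (a := 0) (b := 1)).of_isClosed_subset hclosed fun x ⟨hx0, hx1⟩ => ⟨hx0, ?_⟩
  exact fun i => (Finset.single_le_sum (fun j _ => hx0 j) (Finset.mem_univ i)).trans hx1

lemma measurableSet_cornerSimplex (n : ℕ) : MeasurableSet (cornerSimplex n) :=
  (isCompact_cornerSimplex n).isClosed.measurableSet

lemma Fin.insertNth_mem_cornerSimplex_iff {n : ℕ} (i : Fin (n + 1)) (t : ℝ) (w : Fin n → ℝ) :
    i.insertNth t w ∈ cornerSimplex (n + 1) ↔
      w ∈ cornerSimplex n ∧ t ∈ Set.Icc 0 (1 - ∑ k, w k) := by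
  simp only [cornerSimplex, Set.mem_ofPred_eq, Set.mem_Icc, Fin.sum_insertNth,
    i.forall_iff_succAbove, Fin.insertNth_apply_same, Fin.insertNth_apply_succAbove]
  constructor
  · rintro ⟨⟨ht, hw⟩, hs⟩
    exact ⟨⟨hw, by linarith [ht]⟩, ht, by linarith⟩
  · rintro ⟨⟨hw, _⟩, ht, hs⟩
    exact ⟨⟨ht, hw⟩, by linarith⟩

lemma integral_eq_integral_insertNth {n : ℕ} (i : Fin (n + 1)) {f : (Fin (n + 1) → ℝ) → ℝ}
    (hf : Integrable f) : ∫ x, f x = ∫ w : Fin n → ℝ, ∫ t : ℝ, f (i.insertNth t w) := by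
  have hmp := (volume_preserving_piFinSuccAbove (fun _ : Fin (n + 1) => ℝ) i).symm
  rw [← hmp.integral_comp (MeasurableEquiv.measurableEmbedding _) f]
  have hint : Integrable (fun z : ℝ × (Fin n → ℝ) => f (i.insertNth z.1 z.2))
      (volume.prod volume) := by
    have := (hmp.integrable_comp_emb (MeasurableEquiv.measurableEmbedding _)).2 hf
    simpa [MeasurableEquiv.piFinSuccAbove_symm_apply, Fin.insertNthEquiv, Function.comp_def,
      Measure.volume_eq_prod] using this
  simpa [MeasurableEquiv.piFinSuccAbove_symm_apply, Fin.insertNthEquiv, Measure.volume_eq_prod]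
    using integral_prod_symm _ hint

lemma setIntegral_cornerSimplex_succ {n : ℕ} (i : Fin (n + 1)) {f : (Fin (n + 1) → ℝ) → ℝ}
    (hf : Continuous f) :
    ∫ x in cornerSimplex (n + 1), f x
      = ∫ w in cornerSimplex n, ∫ t in 0..1 - ∑ k, w k, f (i.insertNth t w) := by
  have hint : Integrable ((cornerSimplex (n + 1)).indicator f) :=
    (integrable_indicator_iff (measurableSet_cornerSimplex _)).mpr
      (hf.continuousOn.integrableOn_compact (isCompact_cornerSimplex _))
  rw [← integral_indicator (measurableSet_cornerSimplex _), integral_eq_integral_insertNth i hint,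
    ← integral_indicator (measurableSet_cornerSimplex _)]
  congr 1 with w
  by_cases hw : w ∈ cornerSimplex n
  · have hc : 0 ≤ 1 - ∑ k, w k := sub_nonneg.mpr hw.2
    have hsection : ∀ t, (cornerSimplex (n + 1)).indicator f (i.insertNth t w)
        = (Set.Icc 0 (1 - ∑ k, w k)).indicator (fun t => f (i.insertNth t w)) t := fun t => by
      classical
      simp only [Set.indicator_apply, Fin.insertNth_mem_cornerSimplex_iff, hw, true_and]
    simp_rw [hsection, Set.indicator_of_mem hw]
    rw [integral_indicator measurableSet_Icc, integral_Icc_eq_integral_Ioc,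
      ← intervalIntegral.integral_of_le hc]
  · simp [Fin.insertNth_mem_cornerSimplex_iff, hw]

lemma integral_sub_pow (c : ℝ) (k : ℕ) : ∫ t in 0..c, (c - t) ^ k = c ^ (k + 1) / (k + 1) := by
  simp [intervalIntegral.integral_comp_sub_left (fun t => t ^ k), integral_pow]

lemma setIntegral_cornerSimplex_one_sub_sum_pow (n k : ℕ) :
    ∫ x in cornerSimplex n, (1 - ∑ i, x i) ^ k = (k.factorial : ℝ) / (n + k).factorial := by
  induction n generalizing k with
  | zero =>
    have : cornerSimplex 0 = Set.univ := by ext; simp [cornerSimplex]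
    simp [this, measureReal_def, Measure.volume_pi_eq_dirac (0 : Fin 0 → ℝ),
      Nat.factorial_ne_zero]
  | succ n ih =>
    rw [setIntegral_cornerSimplex_succ 0 (by fun_prop)]
    simp_rw [Fin.sum_insertNth, show ∀ t s : ℝ, 1 - (t + s) = 1 - s - t from fun t s => by ring,
      integral_sub_pow, integral_div, ih]
    rw [show n + 1 + k = n + (k + 1) by ring, Nat.factorial_succ k]
    push_cast
    field_simp

lemma volume_real_cornerSimplex (n : ℕ) : volume.real (cornerSimplex n) = 1 / n.factorial := by
  simpa using setIntegral_cornerSimplex_one_sub_sum_pow n 0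

lemma hasDerivAt_eval_insertNth {n : ℕ} (i : Fin (n + 1)) (w : Fin n → ℝ)
    (P : MvPolynomial (Fin (n + 1)) ℝ) (t : ℝ) :
    HasDerivAt (fun s => eval (i.insertNth s w) P) (eval (i.insertNth t w) (pderiv i P)) t := by
  induction P using MvPolynomial.induction_on with
  | C a => simpa using hasDerivAt_const t a
  | add p q hp hq =>
    simp only [map_add]
    exact hp.add hq
  | mul_X p j hp =>
    have hcoord : HasDerivAt (fun s => (i.insertNth s w : Fin (n + 1) → ℝ) j)
        (eval (i.insertNth t w) (pderiv i (X j))) t := by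
      rcases eq_or_ne j i with rfl | hji
      · simpa using hasDerivAt_id' t
      · obtain ⟨k, rfl⟩ := Fin.exists_succAbove_eq hji
        simpa [pderiv_X_of_ne hji] using hasDerivAt_const t (w k)
    simp only [map_mul, eval_X]
    refine (hp.mul hcoord).congr_deriv ?_
    simp only [Derivation.leibniz, map_add, map_mul, smul_eq_mul, eval_X]
    ring

lemma setIntegral_cornerSimplex_pderiv_eq_zero {n : ℕ} (i : Fin (n + 1))
    (P : MvPolynomial (Fin (n + 1)) ℝ)
    (h₀ : ∀ x ∈ cornerSimplex (n + 1), x i = 0 → eval x P = 0)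
    (h₁ : ∀ x ∈ cornerSimplex (n + 1), ∑ j, x j = 1 → eval x P = 0) :
    ∫ x in cornerSimplex (n + 1), eval x (pderiv i P) = 0 := by
  rw [setIntegral_cornerSimplex_succ i (continuous_eval _)]
  refine setIntegral_eq_zero_of_forall_eq_zero fun w hw => ?_
  have hc : 0 ≤ 1 - ∑ k, w k := sub_nonneg.mpr hw.2
  have hmem : ∀ t ∈ Set.Icc 0 (1 - ∑ k, w k), i.insertNth t w ∈ cornerSimplex (n + 1) :=
    fun t ht => (Fin.insertNth_mem_cornerSimplex_iff i t w).mpr ⟨hw, ht⟩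
  rw [intervalIntegral.integral_eq_sub_of_hasDerivAt
      (fun t _ => hasDerivAt_eval_insertNth i w P t)
      (((continuous_eval _).comp (by fun_prop)).intervalIntegrable _ _),
    h₁ _ (hmem _ ⟨hc, le_rfl⟩) (by simp [Fin.sum_insertNth]),
    h₀ _ (hmem _ ⟨le_rfl, hc⟩) (by simp), sub_zero]

lemma Ktet_eq_cornerSimplex : Ktet = cornerSimplex 3 := by
  ext x
  simp only [Ktet, cornerSimplex, lam, Set.mem_ofPred_eq, Fin.forall_fin_succ, Fin.sum_univ_three,
    Matrix.cons_val, sub_nonneg, IsEmpty.forall_iff, and_true]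
  constructor
  · rintro ⟨h0, h1, h2, h3⟩
    exact ⟨⟨h1, h2, h3⟩, by linarith⟩
  · rintro ⟨⟨h1, h2, h3⟩, h⟩
    exact ⟨by linarith, h1, h2, h3⟩

lemma divP_eq_divergence (Φ : Fin 3 → MvPolynomial (Fin 3) ℝ) : divP Φ = divergence Φ := rfl

lemma isCompact_Ktet : IsCompact Ktet := Ktet_eq_cornerSimplex ▸ isCompact_cornerSimplex 3

lemma normalVanish_bubble (F : Fin 3 → MvPolynomial (Fin 3) ℝ) : normalVanish (bubble F) := by
  rintro j q ⟨-, hq⟩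
  refine Finset.sum_eq_zero fun i _ => ?_
  fin_cases j <;> fin_cases i <;>
    simp_all [normalK, lam, bubble_apply, lamZero, Fin.sum_univ_three, sub_sub]

lemma setIntegral_Ktet_divergence_bubble (F : Fin 3 → MvPolynomial (Fin 3) ℝ) :
    ∫ x in Ktet, eval x (divergence (bubble F)) = 0 := by
  simp only [Ktet_eq_cornerSimplex, divergence_apply, map_sum]
  rw [integral_finsetSum _ fun i _ =>
    (continuous_eval _).continuousOn.integrableOn_compact (isCompact_cornerSimplex 3)]
  refine Finset.sum_eq_zero fun i _ => setIntegral_cornerSimplex_pderiv_eq_zero i _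
    (fun x _ hx => by simp [bubble_apply, hx]) (fun x _ hx => by simp [bubble_apply, lamZero, hx])

lemma volume_real_Ktet : volume.real Ktet = 1 / 6 := by
  rw [Ktet_eq_cornerSimplex, volume_real_cornerSimplex]
  norm_num [Nat.factorial]

/-- for every B ∈ (P_p)³ there is Φ ∈ (P_p)³ with vanishing normal component
on each face of K such that div(B+Φ) is constant on K, equal to (1/|K|) ∫_K div B dx,
|K| = 1/6. -/
theorem local_correction_to_constant_divergence (p : ℕ) (hp : 1 ≤ p)
    (B : Fin 3 → MvPolynomial (Fin 3) ℝ) (hB : ∀ i, (B i).totalDegree ≤ p) :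
    ∃ Φ : Fin 3 → MvPolynomial (Fin 3) ℝ,
      (∀ i, (Φ i).totalDegree ≤ p) ∧ normalVanish Φ ∧
      ∀ x ∈ Ktet, MvPolynomial.eval x (divP (B + Φ))
        = ((1:ℝ)/6)⁻¹ * ∫ y in Ktet, MvPolynomial.eval y (divP B) := by
  have hdeg : (divP B).totalDegree ≤ p - 1 :=
    (totalDegree_finsetSum _ _).trans <| Finset.sup_le fun i _ =>
      (totalDegree_pderiv_le i (B i)).trans (Nat.sub_le_sub_right (hB i) 1)
  obtain ⟨F, c, hF, hdiv⟩ :=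
    restrictTotalDegree_le_correctable (p - 1) ((mem_restrictTotalDegree _ _ _).mpr hdeg)
  rw [divP_eq_divergence] at hdiv
  have hmean : ∫ y in Ktet, eval y (divergence B) = c / 6 := by
    simp_rw [hdiv, map_add, eval_C]
    rw [integral_add ((continuous_eval _).continuousOn.integrableOn_compact isCompact_Ktet)
        (continuous_const.continuousOn.integrableOn_compact isCompact_Ktet),
      setIntegral_Ktet_divergence_bubble, setIntegral_const, volume_real_Ktet, smul_eq_mul]
    ring
  refine ⟨bubble (-F), fun i => ?_, normalVanish_bubble _, fun x _ => ?_⟩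
  · rw [map_neg, Pi.neg_apply, totalDegree_neg]
    exact (hF i).trans (by omega)
  · rw [divP_eq_divergence, divP_eq_divergence, hmean, map_add, map_neg, map_neg, hdiv]
    simp only [map_add, map_neg, eval_C]
    ring
end
end

section
/- Let K be the reference tetrahedron in ℝ³ and let (k₁,k₂,k₃) be any triple of distinct indices in {0,1,2,3}, with k₄ the remaining index, so that F = F_{k₄} is the face of K containing the vertices v_{k₁}, v_{k₂}, v_{k₃}. Then the vector field Φ(x) = λ_{k₁}(x) λ_{k₂}(x) ∇λ_{k₃} × ∇λ_{k₁} (a degree-2 vector polynomial, where × is the cross product in ℝ³) has vanishing normal component on every face of K other than F: Φ(q)·n_j = 0 for every j ≠ k₄ and every q ∈ F_j. -/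
open MeasureTheory MvPolynomial Real

noncomputable section

/-- Φ = λ_{k₁} λ_{k₂} ∇λ_{k₃} × ∇λ_{k₁} has vanishing normal component on
every face of K other than the face F_{k₄} opposite the remaining vertex v_{k₄}. -/
theorem edge_based_face_function_p2 (k₁ k₂ k₃ k₄ : Fin 4)
    (h12 : k₁ ≠ k₂) (h13 : k₁ ≠ k₃) (h23 : k₂ ≠ k₃)
    (h41 : k₄ ≠ k₁) (h42 : k₄ ≠ k₂) (h43 : k₄ ≠ k₃) :
    ∀ j : Fin 4, j ≠ k₄ → ∀ q ∈ faceK j,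
      ∑ i, ((lam k₁ q * lam k₂ q) • (crossProduct (gradLam k₃) (gradLam k₁))) i
        * normalK j i = 0 := by
  intro j hj q hq
  have hq2 : lam j q = 0 := hq.2
  have hcase : j = k₁ ∨ j = k₂ ∨ j = k₃ := by omega
  rcases hcase with rfl | rfl | rfl
  · simp [Fin.sum_univ_three, hq2]
  · simp [Fin.sum_univ_three, hq2]
  · fin_cases k₁ <;> fin_cases j <;>
      simp_all [Fin.sum_univ_three, crossProduct, gradLam, normalK]
end
end

section
/- Let U ∈ ℝ³ be a constant vector and let B : ℝ × ℝ³ → ℝ³ be twice continuously differentiable. Suppose B satisfies the magnetic induction equation ∂_t B_i(t,x) = − Σ_{j=1}^{3} ∂_{x_j}(B_i U_j − U_i B_j)(t,x) for all i ∈ {1,2,3} and all (t,x). If the spatial divergence of B vanishes at time 0, i.e. Σ_{i=1}^{3} ∂_{x_i} B_i(0,x) = 0 for all x ∈ ℝ³, then Σ_{i=1}^{3} ∂_{x_i} B_i(t,x) = 0 for all t ∈ ℝ and all x ∈ ℝ³. -/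
/-!
Write the induction equation as `∂ₜ Bᵢ = -∑ⱼ ∂ⱼ Φᵢⱼ` with the antisymmetric flux
`Φᵢⱼ = Bᵢ Uⱼ - Uᵢ Bⱼ`. Since mixed partial derivatives of a `C²` field commute,
`∂ₜ (div B) = -∑ᵢⱼ ∂ᵢ ∂ⱼ Φᵢⱼ`, and this double sum vanishes because it pairs a symmetric
operator with an antisymmetric tensor. So `div B` is constant in time.
-/

open MeasureTheory MvPolynomial Real

noncomputable section

open Finset

section SecondDerivatives

variable {𝕜 E G : Type*} [RCLike 𝕜] [NormedAddCommGroup E] [NormedSpace 𝕜 E]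
  [NormedAddCommGroup G] [NormedSpace 𝕜 G]

theorem ContDiff.differentiable_fderiv_apply {f : E → G} (hf : ContDiff 𝕜 2 f) (w : E) :
    Differentiable 𝕜 fun q => fderiv 𝕜 f q w :=
  ((hf.fderiv_right (m := 1) le_rfl).differentiable one_ne_zero).clm_apply
    (differentiable_const w)

theorem ContDiff.fderiv_fderiv_apply_comm {f : E → G} (hf : ContDiff 𝕜 2 f) (p v w : E) :
    fderiv 𝕜 (fun q => fderiv 𝕜 f q w) p v = fderiv 𝕜 (fun q => fderiv 𝕜 f q v) p w := by
  have hf' : Differentiable 𝕜 (fderiv 𝕜 f) :=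
    (hf.fderiv_right (m := 1) le_rfl).differentiable one_ne_zero
  have hsymm : IsSymmSndFDerivAt 𝕜 f p :=
    hf.contDiffAt.isSymmSndFDerivAt (by simp [minSmoothness_of_isRCLikeNormedField])
  simp only [fderiv_clm_apply (hf' p) (differentiableAt_const _), fderiv_const_apply,
    ContinuousLinearMap.comp_zero, zero_add, ContinuousLinearMap.flip_apply]
  exact hsymm v w

variable {ι : Type*} [Fintype ι]

theorem sum_sum_fderiv_fderiv_eq_zero_of_antisymm {Φ : ι → ι → E → G}
    (hΦ : ∀ i j, ContDiff 𝕜 2 (Φ i j)) (hanti : ∀ i j, Φ j i = -Φ i j) (v : ι → E) (p : E) :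
    ∑ i, ∑ j, fderiv 𝕜 (fun q => fderiv 𝕜 (Φ i j) q (v j)) p (v i) = 0 := by
  set a : ι → ι → G := fun i j => fderiv 𝕜 (fun q => fderiv 𝕜 (Φ i j) q (v j)) p (v i)
  have ha : ∀ i j, a j i = -a i j := fun i j => by
    simp only [a, hanti i j, fderiv_neg, neg_apply, fderiv_fun_neg,
      (hΦ i j).fderiv_fderiv_apply_comm]
  have := IsAddTorsionFree.of_isTorsionFree 𝕜 G
  refine self_eq_neg.mp ?_
  calc ∑ i, ∑ j, a i j = ∑ i, ∑ j, a j i := sum_comm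
    _ = ∑ i, ∑ j, -a i j := sum_congr rfl fun i _ => sum_congr rfl fun j _ => ha i j
    _ = -∑ i, ∑ j, a i j := by simp only [sum_neg_distrib]

theorem fderiv_sum_fderiv_eq_zero_of_antisymm_flux {F : ι → E → G} {Φ : ι → ι → E → G}
    (hF : ∀ i, ContDiff 𝕜 2 (F i)) (hΦ : ∀ i j, ContDiff 𝕜 2 (Φ i j))
    (hanti : ∀ i j, Φ j i = -Φ i j) (v : ι → E) (w : E)
    (hflux : ∀ i q, fderiv 𝕜 (F i) q w = -∑ j, fderiv 𝕜 (Φ i j) q (v j)) (p : E) :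
    fderiv 𝕜 (fun q => ∑ i, fderiv 𝕜 (F i) q (v i)) p w = 0 := by
  calc fderiv 𝕜 (fun q => ∑ i, fderiv 𝕜 (F i) q (v i)) p w
      = ∑ i, fderiv 𝕜 (fun q => fderiv 𝕜 (F i) q w) p (v i) := by
        rw [fderiv_fun_sum fun i _ => (hF i).differentiable_fderiv_apply _ p]
        simp only [_root_.sum_apply, (hF _).fderiv_fderiv_apply_comm]
    _ = -∑ i, ∑ j, fderiv 𝕜 (fun q => fderiv 𝕜 (Φ i j) q (v j)) p (v i) := by
        simp only [hflux, fderiv_fun_neg, neg_apply, sum_neg_distrib,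
          fderiv_fun_sum fun j _ => (hΦ _ j).differentiable_fderiv_apply _ p,
          _root_.sum_apply]
    _ = 0 := by rw [sum_sum_fderiv_fderiv_eq_zero_of_antisymm hΦ hanti, neg_zero]

end SecondDerivatives

section Slices

variable {E G : Type*} [NormedAddCommGroup E] [NormedSpace ℝ E]
  [NormedAddCommGroup G] [NormedSpace ℝ G]

theorem DifferentiableAt.hasDerivAt_comp_prodMk_const {f : ℝ × E → G} {t : ℝ} {x : E}
    (hf : DifferentiableAt ℝ f (t, x)) :
    HasDerivAt (fun s => f (s, x)) (fderiv ℝ f (t, x) (1, 0)) t :=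
  hf.hasFDerivAt.comp_hasDerivAt t ((hasDerivAt_id t).prodMk (hasDerivAt_const t x))

theorem DifferentiableAt.fderiv_comp_const_prodMk {f : ℝ × E → G} {t : ℝ} {x : E}
    (hf : DifferentiableAt ℝ f (t, x)) (v : E) :
    fderiv ℝ (fun y => f (t, y)) x v = fderiv ℝ f (t, x) (0, v) := by
  have h : HasFDerivAt (fun y => f (t, y))
      ((fderiv ℝ f (t, x)).comp (ContinuousLinearMap.inr ℝ ℝ E)) x :=
    hf.hasFDerivAt.comp x ((hasFDerivAt_const t x).prodMk (hasFDerivAt_id x))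
  rw [h.fderiv]
  rfl

theorem apply_prodMk_eq_of_fderiv_apply_inl_eq_zero {f : ℝ × E → G} (hf : Differentiable ℝ f)
    (h : ∀ p, fderiv ℝ f p (1, 0) = 0) (x : E) (s t : ℝ) : f (s, x) = f (t, x) :=
  is_const_of_deriv_eq_zero (fun r => (hf (r, x)).hasDerivAt_comp_prodMk_const.differentiableAt)
    (fun r => (hf (r, x)).hasDerivAt_comp_prodMk_const.deriv.trans (h (r, x))) s t

end Slices

/-- a C² solution of the magnetic induction equation
B_t = -div(B Uᵀ - U Bᵀ) which is divergence-free at time 0 is divergence-free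
for all time. -/
theorem induction_equation_preserves_div_free
    (U : Fin 3 → ℝ) (B : ℝ × (Fin 3 → ℝ) → (Fin 3 → ℝ)) (hB : ContDiff ℝ 2 B)
    (heq : ∀ (t : ℝ) (x : Fin 3 → ℝ) (i : Fin 3),
      deriv (fun s => B (s, x) i) t =
        - ∑ j, fderiv ℝ (fun y => B (t, y) i * U j - U i * B (t, y) j) x (Pi.single j 1))
    (h0 : ∀ x : Fin 3 → ℝ,
      ∑ i, fderiv ℝ (fun y => B (0, y) i) x (Pi.single i 1) = 0) :
    ∀ (t : ℝ) (x : Fin 3 → ℝ),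
      ∑ i, fderiv ℝ (fun y => B (t, y) i) x (Pi.single i 1) = 0 := by
  set Φ : Fin 3 → Fin 3 → ℝ × (Fin 3 → ℝ) → ℝ := fun i j p => B p i * U j - U i * B p j
  have hF : ∀ i, ContDiff ℝ 2 fun p => B p i := fun i => (contDiff_apply ℝ ℝ i).comp hB
  have hΦ : ∀ i j, ContDiff ℝ 2 (Φ i j) := fun i j =>
    ((hF i).mul contDiff_const).sub (contDiff_const.mul (hF j))
  have hanti : ∀ i j, Φ j i = -Φ i j := fun i j => funext fun p => by
    simp only [Φ, Pi.neg_apply]; ring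
  have hflux : ∀ i p, fderiv ℝ (fun q => B q i) p (1, 0) =
      -∑ j, fderiv ℝ (Φ i j) p (0, Pi.single j 1) := by
    rintro i ⟨t, x⟩
    rw [← ((hF i).differentiable two_ne_zero _).hasDerivAt_comp_prodMk_const.deriv, heq]
    simp only [((hΦ i _).differentiable two_ne_zero _).fderiv_comp_const_prodMk, Φ]
  have hdiv : ∀ t x, ∑ i, fderiv ℝ (fun y => B (t, y) i) x (Pi.single i 1) =
      ∑ i, fderiv ℝ (fun p => B p i) (t, x) (0, Pi.single i 1) := fun t x =>
    sum_congr rfl fun i _ => ((hF i).differentiable two_ne_zero _).fderiv_comp_const_prodMk _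
  intro t x
  rw [hdiv, apply_prodMk_eq_of_fderiv_apply_inl_eq_zero (f := fun p => ∑ i, fderiv ℝ _ p _)
    (Differentiable.fun_sum fun i _ => (hF i).differentiable_fderiv_apply _)
    (fderiv_sum_fderiv_eq_zero_of_antisymm_flux hF hΦ hanti _ _ hflux) x t 0, ← hdiv, h0]
end
end
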